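/- Let f be convex and L-smooth on a real inner product space, assume f attains a global minimum at x*, let δ ∈ (0,1), let h satisfy (3δ+2-√(4-3δ²))/(2δ(δ+1)) ≤ h ≤ 2/(1+δ), and let x1 = x0 - (h/L)·d0 where d0 satisfies ‖d0 - ∇f(x0)‖ ≤ δ‖∇f(x0)‖. Then (1/L)·‖∇f(x1)‖² ≤ 2(1 - h(1+δ))² · (f(x0) - f(x*)). -/

import Mathlib

open Set
open scoped RealInnerProductSpace

section Aux

variable {H : Type*} [NormedAddCommGroup H] [InnerProductSpace ℝ H] [CompleteSpace H]

private lemma hasDerivAt_comp_line (f : H → ℝ) (f' : H → H)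
    (hgrad : ∀ x, HasGradientAt f (f' x) x) (x v : H) (t : ℝ) :
    HasDerivAt (fun s : ℝ => f (x + s • v)) ⟪f' (x + t • v), v⟫ t := by
  have hline : HasDerivAt (fun s : ℝ => x + s • v) v t := by
    simpa using ((hasDerivAt_id t).smul_const v).const_add x
  have hcomp := (hgrad (x + t • v)).hasFDerivAt.comp_hasDerivAt t hline
  exact hcomp

private lemma convex_grad_ineq (f : H → ℝ) (f' : H → H)
    (hconv : ConvexOn ℝ Set.univ f)
    (hgrad : ∀ x, HasGradientAt f (f' x) x) (x y : H) :
    f x + ⟪f' x, y - x⟫ ≤ f y := by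
  have hφconv : ConvexOn ℝ Set.univ (f ∘ (AffineMap.lineMap x y : ℝ →ᵃ[ℝ] H)) := by
    simpa using hconv.comp_affineMap (AffineMap.lineMap x y)
  have hfun : (f ∘ (AffineMap.lineMap x y : ℝ →ᵃ[ℝ] H)) = fun t : ℝ => f (x + t • (y - x)) := by
    funext t
    simp only [Function.comp_apply, AffineMap.lineMap_apply_module]
    congr 1
    module
  have hder : HasDerivAt (f ∘ (AffineMap.lineMap x y : ℝ →ᵃ[ℝ] H)) ⟪f' x, y - x⟫ 0 := by
    rw [hfun]
    simpa using hasDerivAt_comp_line f f' hgrad x (y - x) 0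
  have hs := hφconv.le_slope_of_hasDerivAt (Set.mem_univ (0:ℝ)) (Set.mem_univ (1:ℝ))
    one_pos hder
  rw [slope_def_field] at hs
  have h0 : (f ∘ (AffineMap.lineMap x y : ℝ →ᵃ[ℝ] H)) 0 = f x := by
    simp
  have h1 : (f ∘ (AffineMap.lineMap x y : ℝ →ᵃ[ℝ] H)) 1 = f y := by
    simp
  rw [h0, h1] at hs
  norm_num at hs
  linarith

private lemma smooth_descent (f : H → ℝ) (f' : H → H) (L : ℝ) (hL : 0 < L)
    (hgrad : ∀ x, HasGradientAt f (f' x) x) (hlip : LipschitzWith L.toNNReal f')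
    (x y : H) : f y ≤ f x + ⟪f' x, y - x⟫ + L / 2 * ‖y - x‖ ^ 2 := by
  have hlip' : ∀ a b : H, ‖f' a - f' b‖ ≤ L * ‖a - b‖ := by
    intro a b
    have h1 := hlip.dist_le_mul a b
    rwa [dist_eq_norm, dist_eq_norm, Real.coe_toNNReal L hL.le] at h1
  set v := y - x with hv
  set ψ : ℝ → ℝ := fun t => f (x + t • v) - t * ⟪f' x, v⟫ - L * t ^ 2 / 2 * ‖v‖ ^ 2 with hψ
  have hψder : ∀ t : ℝ, HasDerivAt ψ
      (⟪f' (x + t • v), v⟫ - ⟪f' x, v⟫ - L * t * ‖v‖ ^ 2) t := by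
    intro t
    have h1 := hasDerivAt_comp_line f f' hgrad x v t
    have h2 : HasDerivAt (fun s : ℝ => s * ⟪f' x, v⟫) ⟪f' x, v⟫ t := by
      simpa using (hasDerivAt_id t).mul_const ⟪f' x, v⟫
    have h3 : HasDerivAt (fun s : ℝ => L * s ^ 2 / 2 * ‖v‖ ^ 2) (L * t * ‖v‖ ^ 2) t := by
      have h4 := (((hasDerivAt_pow 2 t).const_mul L).div_const 2).mul_const (‖v‖ ^ 2)
      exact h4.congr_deriv (by simp only [Nat.cast_ofNat, Nat.reduceSub, pow_one]; ring)
    exact (h1.sub h2).sub h3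
  have hdiff : Differentiable ℝ ψ := fun t => (hψder t).differentiableAt
  have hmono : AntitoneOn ψ (Set.Icc (0:ℝ) 1) := by
    apply antitoneOn_of_deriv_nonpos (convex_Icc 0 1) hdiff.continuous.continuousOn
      (fun t _ => (hdiff t).differentiableWithinAt)
    intro t ht
    rw [interior_Icc] at ht
    rw [(hψder t).deriv]
    have hd : ⟪f' (x + t • v), v⟫ - ⟪f' x, v⟫ = ⟪f' (x + t • v) - f' x, v⟫ := by
      rw [inner_sub_left]
    have hb : ⟪f' (x + t • v) - f' x, v⟫ ≤ ‖f' (x + t • v) - f' x‖ * ‖v‖ :=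
      real_inner_le_norm _ _
    have hc : ‖f' (x + t • v) - f' x‖ ≤ L * (t * ‖v‖) := by
      have h5 := hlip' (x + t • v) x
      rw [add_sub_cancel_left, norm_smul, Real.norm_eq_abs, abs_of_pos ht.1] at h5
      linarith
    have he : ‖f' (x + t • v) - f' x‖ * ‖v‖ ≤ L * (t * ‖v‖) * ‖v‖ :=
      mul_le_mul_of_nonneg_right hc (norm_nonneg v)
    rw [hd]
    nlinarith [norm_nonneg v]
  have h10 := hmono (Set.left_mem_Icc.mpr zero_le_one) (Set.right_mem_Icc.mpr zero_le_one)
    zero_le_one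
  have hψ0 : ψ 0 = f x := by simp [hψ]
  have hψ1 : ψ 1 = f y - ⟪f' x, v⟫ - L / 2 * ‖v‖ ^ 2 := by
    simp only [hψ, one_smul, one_pow, mul_one]
    rw [hv, add_sub_cancel]
    ring
  rw [hψ0, hψ1] at h10
  linarith

private lemma interp_ineq (f : H → ℝ) (f' : H → H) (L : ℝ) (hL : 0 < L)
    (hconv : ConvexOn ℝ Set.univ f)
    (hgrad : ∀ x, HasGradientAt f (f' x) x) (hlip : LipschitzWith L.toNNReal f')
    (x y : H) :
    f x + ⟪f' x, y - x⟫ + 1 / (2 * L) * ‖f' y - f' x‖ ^ 2 ≤ f y := by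
  set u := f' y - f' x with hu
  set z := y - (1 / L) • u with hz
  have h1 := convex_grad_ineq f f' hconv hgrad x z
  have h2 := smooth_descent f f' L hL hgrad hlip y z
  have hzy : z - y = -((1 / L) • u) := by rw [hz]; abel
  have hzx : z - x = (y - x) - (1 / L) • u := by rw [hz]; abel
  have e1 : ⟪f' x, z - x⟫ = ⟪f' x, y - x⟫ - 1 / L * ⟪f' x, u⟫ := by
    rw [hzx, inner_sub_right, real_inner_smul_right]
  have e2 : ⟪f' y, z - y⟫ = -(1 / L * ⟪f' y, u⟫) := by
    rw [hzy, inner_neg_right, real_inner_smul_right]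
  have e3 : ‖z - y‖ ^ 2 = (1 / L) ^ 2 * ‖u‖ ^ 2 := by
    rw [hzy, norm_neg, norm_smul, Real.norm_eq_abs, mul_pow, sq_abs]
  have e4 : ⟪f' y, u⟫ - ⟪f' x, u⟫ = ‖u‖ ^ 2 := by
    rw [← inner_sub_left, ← hu, real_inner_self_eq_norm_sq]
  rw [e1] at h1
  rw [e2, e3] at h2
  have hL' : L ≠ 0 := ne_of_gt hL
  have key : L / 2 * ((1 / L) ^ 2 * ‖u‖ ^ 2) = 1 / (2 * L) * ‖u‖ ^ 2 := by
    field_simp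
  rw [key] at h2
  have e5 : 1 / L * ⟪f' y, u⟫ - 1 / L * ⟪f' x, u⟫ = 1 / L * ‖u‖ ^ 2 := by
    rw [← mul_sub, e4]
  have e6 : 1 / L * ‖u‖ ^ 2 - 1 / (2 * L) * ‖u‖ ^ 2 = 1 / (2 * L) * ‖u‖ ^ 2 := by
    field_simp
    ring
  linarith

private lemma expand2 (a b : H) (s : ℝ) :
    ‖a + s • b‖ ^ 2 = ‖a‖ ^ 2 + 2 * s * ⟪b, a⟫ + s ^ 2 * ‖b‖ ^ 2 := by
  rw [norm_add_sq_real, real_inner_smul_right, real_inner_comm a b, norm_smul,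
    Real.norm_eq_abs, mul_pow, sq_abs]
  ring

private lemma expand3 (a b c : H) (s t : ℝ) :
    ‖a + s • b + t • c‖ ^ 2 = ‖a‖ ^ 2 + s ^ 2 * ‖b‖ ^ 2 + t ^ 2 * ‖c‖ ^ 2
      + 2 * s * ⟪b, a⟫ + 2 * t * ⟪c, a⟫ + 2 * s * t * ⟪c, b⟫ := by
  rw [norm_add_sq_real, expand2, real_inner_smul_right, inner_add_left, real_inner_smul_left,
    real_inner_comm a c, real_inner_comm b c, norm_smul, Real.norm_eq_abs, mul_pow, sq_abs]
  ring

end Aux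

set_option maxHeartbeats 2000000 in
/-- One step of relatively inexact gradient descent (inexactness `δ ∈ (0,1)`)
on a convex `L`-smooth function with minimizer `xstar`, right regime
`(3δ+2-√(4-3δ²))/(2δ(δ+1)) ≤ h ≤ 2/(1+δ)`:
`(1/L)·‖∇f(x1)‖² ≤ 2(1-h(1+δ))² · (f(x0) - f(x*))`. -/
theorem one_step_inexact_gd_right_regime_gap
    {H : Type*} [NormedAddCommGroup H] [InnerProductSpace ℝ H] [CompleteSpace H]
    (f : H → ℝ) (f' : H → H) (L : ℝ) (hL : 0 < L)
    (hconv : ConvexOn ℝ Set.univ f)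
    (hgrad : ∀ x, HasGradientAt f (f' x) x)
    (hlip : LipschitzWith L.toNNReal f')
    (xstar : H) (hmin : ∀ y, f xstar ≤ f y)
    (δ : ℝ) (hδ : δ ∈ Set.Ioo (0 : ℝ) 1)
    (h : ℝ)
    (hlb : (3 * δ + 2 - Real.sqrt (4 - 3 * δ ^ 2)) / (2 * δ * (δ + 1)) ≤ h)
    (hub : h ≤ 2 / (1 + δ))
    (x0 d0 x1 : H)
    (hd0 : ‖d0 - f' x0‖ ≤ δ * ‖f' x0‖)
    (hx1 : x1 = x0 - (h / L) • d0) :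
    (1 / L) * ‖f' x1‖ ^ 2 ≤ 2 * (1 - h * (1 + δ)) ^ 2 * (f x0 - f xstar) := by
  obtain ⟨hδ0, hδ1⟩ := hδ
  have h1δ : (0:ℝ) < 1 + δ := by linarith
  have hub' : h * (1 + δ) ≤ 2 := by
    rw [le_div_iff₀ h1δ] at hub
    exact hub
  have hden : (0:ℝ) < 2 * δ * (δ + 1) := by positivity
  have hlb' : 3 * δ + 2 - Real.sqrt (4 - 3 * δ ^ 2) ≤ h * (2 * δ * (δ + 1)) := by
    rw [div_le_iff₀ hden] at hlb
    exact hlb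
  have hR2 : Real.sqrt (4 - 3 * δ ^ 2) ^ 2 = 4 - 3 * δ ^ 2 :=
    Real.sq_sqrt (by nlinarith)
  have hRnn : 0 ≤ Real.sqrt (4 - 3 * δ ^ 2) := Real.sqrt_nonneg _
  have hG : 2 * δ * (δ + 1) * h ≤ 3 * δ + 2 + Real.sqrt (4 - 3 * δ ^ 2) := by
    nlinarith [hub', hRnn, hδ0, hδ1]
  have hprod : 0 ≤ (h * (2 * δ * (δ + 1)) - (3 * δ + 2 - Real.sqrt (4 - 3 * δ ^ 2)))
      * ((3 * δ + 2 + Real.sqrt (4 - 3 * δ ^ 2)) - 2 * δ * (δ + 1) * h) :=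
    mul_nonneg (by linarith) (by linarith)
  have hq4 : 4 * δ * (δ + 1) * (δ * (1 + δ) * h ^ 2 - (2 + 3 * δ) * h + 3) ≤ 0 := by
    nlinarith [hprod, hR2]
  have hq : δ * (1 + δ) * h ^ 2 - (2 + 3 * δ) * h + 3 ≤ 0 := by
    nlinarith [hq4, mul_pos (mul_pos hδ0 h1δ) (by norm_num : (0:ℝ) < 4)]
  have hs : 0 ≤ 2 * (h * (1 + δ) - 1) - 1 - δ * h * (h * (1 + δ) - 1) := by nlinarith [hq]
  have hδh : δ * h < 1 := by nlinarith [hub', hδ0, hδ1]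
  have hm0 : 0 < h * (1 + δ) - 1 := by nlinarith [hs, hδh]
  have hm1 : h * (1 + δ) - 1 ≤ 1 := by linarith
  set g0 := f' x0 with hg0
  set g1 := f' x1 with hg1
  set e := d0 - g0 with he
  have hd0e : d0 = g0 + e := by rw [he]; abel
  have hx0x1 : x0 - x1 = (h / L) • (g0 + e) := by
    rw [hx1, sub_sub_cancel, hd0e]
  have hip2 : ⟪g1, x0 - x1⟫ = h / L * (⟪g0, g1⟫ + ⟪g1, e⟫) := by
    rw [hx0x1, real_inner_smul_right, inner_add_right, real_inner_comm g1 g0]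
  have hip3 : ⟪g0, x1 - x0⟫ = -(h / L * (‖g0‖ ^ 2 + ⟪g0, e⟫)) := by
    rw [← neg_sub x0 x1, inner_neg_right, hx0x1, real_inner_smul_right, inner_add_right,
      real_inner_self_eq_norm_sq]
  -- E1 : optimality gap at x1
  have hE1 : f xstar ≤ f x1 - 1 / (2 * L) * ‖g1‖ ^ 2 := by
    have hd := smooth_descent f f' L hL hgrad hlip x1 (x1 - (1 / L) • g1)
    have hmn := hmin (x1 - (1 / L) • g1)
    have h1 : (x1 - (1 / L) • g1) - x1 = -((1 / L) • g1) := by abel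
    rw [h1, inner_neg_right, real_inner_smul_right, real_inner_self_eq_norm_sq, norm_neg,
      norm_smul, Real.norm_eq_abs, abs_of_pos (by positivity : (0:ℝ) < 1 / L)] at hd
    have hkey : L / 2 * (1 / L * ‖g1‖) ^ 2 = 1 / (2 * L) * ‖g1‖ ^ 2 := by
      field_simp
    rw [mul_pow] at hd
    have hkey2 : L / 2 * ((1 / L) ^ 2 * ‖g1‖ ^ 2) = 1 / (2 * L) * ‖g1‖ ^ 2 := by
      field_simp
    rw [hkey2] at hd
    have hLinv : 1 / L * ‖g1‖ ^ 2 - 1 / (2 * L) * ‖g1‖ ^ 2 = 1 / (2 * L) * ‖g1‖ ^ 2 := by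
      field_simp
      ring
    linarith
  -- E2 and E3 : interpolation inequalities
  have hE2 := interp_ineq f f' L hL hconv hgrad hlip x1 x0
  have hE3 := interp_ineq f f' L hL hconv hgrad hlip x0 x1
  rw [hip2, ← hg0, ← hg1, norm_sub_sq_real] at hE2
  rw [hip3, ← hg0, ← hg1, norm_sub_sq_real, real_inner_comm g0 g1] at hE3
  -- E5 : relative inexactness
  have hE5 : ‖e‖ ^ 2 ≤ δ ^ 2 * ‖g0‖ ^ 2 := by
    have h1 : ‖e‖ ^ 2 ≤ (δ * ‖g0‖) ^ 2 := pow_le_pow_left₀ (norm_nonneg e) hd0 2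
    rw [mul_pow] at h1
    exact h1
  -- quadratic form certificates
  have hUeq := expand2 g1 g0 (h * (1 + δ) - 1)
  have hU : 0 ≤ ‖g1‖ ^ 2 + 2 * (h * (1 + δ) - 1) * ⟪g0, g1⟫
      + (h * (1 + δ) - 1) ^ 2 * ‖g0‖ ^ 2 := by
    rw [← hUeq]
    positivity
  have hVeq := expand3 e g1 g0 δ (δ * (h * (1 + δ) - 2))
  have hV : (0:ℝ) ≤ ‖e + δ • g1 + (δ * (h * (1 + δ) - 2)) • g0‖ ^ 2 := by positivity
  have hW : 0 ≤ δ * ‖g0‖ ^ 2 + δ * ‖g1‖ ^ 2 + δ * (h * (1 + δ) - 2) ^ 2 * ‖g0‖ ^ 2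
      + 2 * ⟪g1, e⟫ + 2 * (h * (1 + δ) - 2) * ⟪g0, e⟫
      + 2 * δ * (h * (1 + δ) - 2) * ⟪g0, g1⟫ := by
    rw [← mul_nonneg_iff_of_pos_left hδ0]
    nlinarith [hV, hVeq, hE5]
  -- assemble the certificate
  have k1 : 0 ≤ 2 * (h * (1 + δ) - 1) ^ 2 * (f x1 - 1 / (2 * L) * ‖g1‖ ^ 2 - f xstar) :=
    mul_nonneg (by positivity) (by linarith)
  have k2 : 0 ≤ 2 * (h * (1 + δ) - 1) * (f x0 - f x1 - h / L * (⟪g0, g1⟫ + ⟪g1, e⟫)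
      - 1 / (2 * L) * (‖g0‖ ^ 2 - 2 * ⟪g0, g1⟫ + ‖g1‖ ^ 2)) :=
    mul_nonneg (by linarith) (by linarith)
  have k3 : 0 ≤ 2 * (h * (1 + δ) - 1) * (2 - h * (1 + δ)) * (f x1 - f x0
      + h / L * (‖g0‖ ^ 2 + ⟪g0, e⟫)
      - 1 / (2 * L) * (‖g1‖ ^ 2 - 2 * ⟪g0, g1⟫ + ‖g0‖ ^ 2)) :=
    mul_nonneg (mul_nonneg (by linarith) (by linarith)) (by linarith)
  have kU : 0 ≤ 1 / L * ((2 * (h * (1 + δ) - 1) - 1 - δ * h * (h * (1 + δ) - 1))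
      * (‖g1‖ ^ 2 + 2 * (h * (1 + δ) - 1) * ⟪g0, g1⟫
        + (h * (1 + δ) - 1) ^ 2 * ‖g0‖ ^ 2)) :=
    mul_nonneg (by positivity) (mul_nonneg hs hU)
  have kW : 0 ≤ 1 / L * ((h * (h * (1 + δ) - 1))
      * (δ * ‖g0‖ ^ 2 + δ * ‖g1‖ ^ 2 + δ * (h * (1 + δ) - 2) ^ 2 * ‖g0‖ ^ 2
        + 2 * ⟪g1, e⟫ + 2 * (h * (1 + δ) - 2) * ⟪g0, e⟫
        + 2 * δ * (h * (1 + δ) - 2) * ⟪g0, g1⟫)) := by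
    have hh0 : 0 < h := by nlinarith [hm0, h1δ, hδ1]
    exact mul_nonneg (by positivity) (mul_nonneg (by positivity) hW)
  have hid : 2 * (1 - h * (1 + δ)) ^ 2 * (f x0 - f xstar) - (1 / L) * ‖g1‖ ^ 2 =
    (2 * (h * (1 + δ) - 1) ^ 2 * (f x1 - 1 / (2 * L) * ‖g1‖ ^ 2 - f xstar))
    + (2 * (h * (1 + δ) - 1) * (f x0 - f x1 - h / L * (⟪g0, g1⟫ + ⟪g1, e⟫)
        - 1 / (2 * L) * (‖g0‖ ^ 2 - 2 * ⟪g0, g1⟫ + ‖g1‖ ^ 2)))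
    + (2 * (h * (1 + δ) - 1) * (2 - h * (1 + δ)) * (f x1 - f x0
        + h / L * (‖g0‖ ^ 2 + ⟪g0, e⟫)
        - 1 / (2 * L) * (‖g1‖ ^ 2 - 2 * ⟪g0, g1⟫ + ‖g0‖ ^ 2)))
    + (1 / L * ((2 * (h * (1 + δ) - 1) - 1 - δ * h * (h * (1 + δ) - 1))
        * (‖g1‖ ^ 2 + 2 * (h * (1 + δ) - 1) * ⟪g0, g1⟫
          + (h * (1 + δ) - 1) ^ 2 * ‖g0‖ ^ 2)))
    + (1 / L * ((h * (h * (1 + δ) - 1))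
        * (δ * ‖g0‖ ^ 2 + δ * ‖g1‖ ^ 2 + δ * (h * (1 + δ) - 2) ^ 2 * ‖g0‖ ^ 2
          + 2 * ⟪g1, e⟫ + 2 * (h * (1 + δ) - 2) * ⟪g0, e⟫
          + 2 * δ * (h * (1 + δ) - 2) * ⟪g0, g1⟫))) := by
    ring
  linarith [k1, k2, k3, kU, kW, hid]
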